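/- hom(P_5, T(7,1,9)) = 9366, hom(P_7, T(7,1,9)) = 106302, hom(E_5, T(7,1,9)) = 9492, and hom(E_7, T(7,1,9)) = 106932. -/

import Mathlib

/-- A graph, possibly with loops but without multiple edges: a symmetric
adjacency relation on the vertex type. -/
structure LGraph (V : Type*) where
  Adj : V → V → Prop
  symm : ∀ {u v}, Adj u v → Adj v u

/-- `f` is a homomorphism (H-coloring) from `G` to `H`. -/
def LGraph.IsHom {A B : Type*} (G : LGraph A) (H : LGraph B) (f : A → B) : Prop :=
  ∀ ⦃x y⦄, G.Adj x y → H.Adj (f x) (f y)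

/-- The number of homomorphisms from `G` to `H`. -/
noncomputable def homCount {A B : Type*} (G : LGraph A) (H : LGraph B) : ℕ :=
  Nat.card {f : A → B // G.IsHom H f}

/-- `e` is an automorphism of `H`. -/
def IsAut {V : Type*} (H : LGraph V) (e : V ≃ V) : Prop :=
  ∀ a b, H.Adj (e a) (e b) ↔ H.Adj a b

/-- `u` and `v` are automorphically similar in `H`. -/
def AutSim {V : Type*} (H : LGraph V) (u v : V) : Prop :=
  ∃ e : V ≃ V, IsAut H e ∧ e u = v

/-- The path on `n` vertices. -/
def pathGraph (n : ℕ) : LGraph (Fin n) where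
  Adj i j := j.val = i.val + 1 ∨ i.val = j.val + 1
  symm h := h.symm

/-- Upward adjacency for `eGraph`. -/
def eUp (n : ℕ) (i j : Fin n) : Prop :=
  (j.val = i.val + 1 ∧ j.val ≤ n - 2) ∨ (i.val = n - 4 ∧ j.val = n - 1)

/-- The tree `E_n`: the path on `n-1` vertices `0,…,n-2` with a pendant
vertex `n-1` attached to vertex `n-4` (distance 2 from the end `n-2`). -/
def eGraph (n : ℕ) : LGraph (Fin n) where
  Adj i j := eUp n i j ∨ eUp n j i
  symm h := h.symm

/-- Vertices of the spherically symmetric rooted tree `T(x,y,z)`. -/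
abbrev TVert (x y z : ℕ) : Type :=
  Unit ⊕ Fin x ⊕ (Fin x × Fin y) ⊕ (Fin x × Fin y × Fin z)

/-- Parent-to-child adjacency in `T(x,y,z)`. -/
def tUp (x y z : ℕ) : TVert x y z → TVert x y z → Prop
  | Sum.inl _, Sum.inr (Sum.inl _) => True
  | Sum.inr (Sum.inl i), Sum.inr (Sum.inr (Sum.inl p)) => p.1 = i
  | Sum.inr (Sum.inr (Sum.inl p)), Sum.inr (Sum.inr (Sum.inr q)) =>
      q.1 = p.1 ∧ q.2.1 = p.2
  | _, _ => False

/-- The tree `T(x,y,z)`: the root has `x` children, each child has `y`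
children, each grandchild has `z` children. -/
def tGraph (x y z : ℕ) : LGraph (TVert x y z) where
  Adj a b := tUp x y z a b ∨ tUp x y z b a
  symm h := h.symm

/-- `T̂(x,y,z)`: `T(x,y,z)` with a loop added at the root. -/
def tHatGraph (x y z : ℕ) : LGraph (TVert x y z) where
  Adj a b := tUp x y z a b ∨ tUp x y z b a ∨ (a = Sum.inl () ∧ b = Sum.inl ())
  symm := by
    rintro a b (h | h | ⟨h1, h2⟩)
    · exact Or.inr (Or.inl h)
    · exact Or.inl h
    · exact Or.inr (Or.inr ⟨h2, h1⟩)

/-- The distance level of a vertex of `T(x,y,z)` from the root. -/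
def tLevel {x y z : ℕ} : TVert x y z → Fin 4
  | Sum.inl _ => 0
  | Sum.inr (Sum.inl _) => 1
  | Sum.inr (Sum.inr (Sum.inl _)) => 2
  | Sum.inr (Sum.inr (Sum.inr _)) => 3

/-- Upward adjacency for the path-like extension of `G` at `v0`. -/
def extUp {A : Type*} (G : LGraph A) (v0 : A) (n : ℕ) :
    (A ⊕ Fin n) → (A ⊕ Fin n) → Prop := fun a b =>
  (∃ u w, G.Adj u w ∧ a = Sum.inl u ∧ b = Sum.inl w) ∨
  (∃ i : Fin n, i.val = 0 ∧ a = Sum.inl v0 ∧ b = Sum.inr i) ∨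
  (∃ i j : Fin n, j.val = i.val + 1 ∧ a = Sum.inr i ∧ b = Sum.inr j)

/-- `G_n`: the graph obtained from `G_0 = G` by appending a path of `n` new
vertices at `v0`. -/
def pathAppend {A : Type*} (G : LGraph A) (v0 : A) (n : ℕ) : LGraph (A ⊕ Fin n) where
  Adj a b := extUp G v0 n a b ∨ extUp G v0 n b a
  symm h := h.symm


/-!
A homomorphism from a tree can be built one leaf at a time: when a leaf is attached at `p`,
the extensions of a homomorphism `g` of the rest correspond to the neighbours of `g p`. Rooting
`P_{k+1}` and `E_{m+4}` at the end vertex `0` and peeling leaves from there (`E_4` is `P_3` with a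
leaf at `0`, and `E_{m+5}` is `E_{m+4}` with a new leaf prepended at `0`) expresses their rooted
homomorphism counts through iterates of the adjacency operator `w ↦ (v ↦ ∑_{u ~ v} w u)`.
In `T(x,y,z)` the number of neighbours of a vertex on each level depends only on its own level,
so this operator preserves functions of the level and acts on them by a `4 × 4` recursion; the
four counts are then a small computation.
-/

theorem pathGraph_adj_zero {k : ℕ} (j : Fin (k + 2)) : (pathGraph (k + 2)).Adj 0 j ↔ j = 1 := by
  simp only [pathGraph, Fin.ext_iff, Fin.val_zero, Fin.val_one]
  omega

theorem pathGraph_adj_succ {k : ℕ} (i j : Fin (k + 1)) :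
    (pathGraph (k + 2)).Adj i.succ j.succ ↔ (pathGraph (k + 1)).Adj i j := by
  simp [pathGraph]

theorem eGraph_adj_zero {m : ℕ} (j : Fin (m + 5)) : (eGraph (m + 5)).Adj 0 j ↔ j = 1 := by
  simp only [eGraph, eUp, Fin.ext_iff, Fin.val_zero, Fin.val_one]
  omega

theorem eGraph_adj_succ {m : ℕ} (i j : Fin (m + 4)) :
    (eGraph (m + 5)).Adj i.succ j.succ ↔ (eGraph (m + 4)).Adj i j := by
  simp only [eGraph, eUp, Fin.val_succ]
  omega

theorem eGraph_four_adj_last (j : Fin 4) : (eGraph 4).Adj (Fin.last 3) j ↔ j = 0 := by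
  simp only [eGraph, eUp, Fin.ext_iff, Fin.val_last, Fin.val_zero, and_true]
  omega

theorem eGraph_four_adj_castSucc (i j : Fin 3) :
    (eGraph 4).Adj i.castSucc j.castSucc ↔ (pathGraph 3).Adj i j := by
  simp only [eGraph, eUp, pathGraph, Fin.val_castSucc]
  omega

section HomCounting

variable {V : Type*}

noncomputable def rootedHomCount {n : ℕ} (G : LGraph (Fin (n + 1))) (H : LGraph V) (v : V) : ℕ :=
  Nat.card {f : Fin (n + 1) → V // G.IsHom H f ∧ f 0 = v}

theorem homCount_eq_sum_rootedHomCount [Fintype V] {n : ℕ} (G : LGraph (Fin (n + 1)))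
    (H : LGraph V) : homCount G H = ∑ v, rootedHomCount G H v := by
  simp only [homCount, rootedHomCount]
  rw [← Nat.card_sigma]
  exact Nat.card_congr <| (Equiv.sigmaFiberEquiv fun f : {f // G.IsHom H f} => f.1 0).symm.trans
    (Equiv.sigmaCongrRight fun v =>
      Equiv.subtypeSubtypeEquivSubtypeInter (G.IsHom H) (fun f => f 0 = v))

theorem isHom_cons_iff {n : ℕ} {G : LGraph (Fin (n + 2))} {G' : LGraph (Fin (n + 1))}
    (hzero : ∀ j, G.Adj 0 j ↔ j = 1) (hsucc : ∀ i j, G.Adj i.succ j.succ ↔ G'.Adj i j)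
    {H : LGraph V} (v : V) (g : Fin (n + 1) → V) :
    G.IsHom H (Fin.cons v g) ↔ H.Adj v (g 0) ∧ G'.IsHom H g := by
  refine ⟨fun hf => ⟨?_, fun i j hij => ?_⟩, fun ⟨hv, hg⟩ i j hij => ?_⟩
  · simpa using hf ((hzero 1).2 rfl)
  · simpa using hf ((hsucc i j).2 hij)
  have hzero' : ∀ j : Fin (n + 1), G.Adj 0 j.succ → j = 0 := fun j h =>
    Fin.succ_injective _ (((hzero _).1 h).trans Fin.succ_zero_eq_one'.symm)
  cases i using Fin.cases <;> cases j using Fin.cases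
  · exact absurd ((hzero 0).1 hij) Fin.zero_ne_one
  · obtain rfl := hzero' _ hij
    simpa using hv
  · obtain rfl := hzero' _ (G.symm hij)
    simpa using H.symm hv
  · simpa using hg ((hsucc _ _).1 hij)

theorem isHom_snoc_iff {n : ℕ} {G : LGraph (Fin (n + 2))} {G' : LGraph (Fin (n + 1))}
    (p : Fin (n + 1)) (hlast : ∀ j, G.Adj (Fin.last _) j ↔ j = p.castSucc)
    (hcastSucc : ∀ i j, G.Adj i.castSucc j.castSucc ↔ G'.Adj i j)
    {H : LGraph V} (g : Fin (n + 1) → V) (x : V) :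
    G.IsHom H (Fin.snoc g x) ↔ G'.IsHom H g ∧ H.Adj (g p) x := by
  refine ⟨fun hf => ⟨fun i j hij => ?_, ?_⟩, fun ⟨hg, hx⟩ i j hij => ?_⟩
  · simpa using hf ((hcastSucc i j).2 hij)
  · simpa using H.symm (hf ((hlast _).2 rfl))
  have hlast' : ∀ j : Fin (n + 1), G.Adj (Fin.last _) j.castSucc → j = p := fun j h => by
    simpa using (hlast _).1 h
  cases i using Fin.lastCases <;> cases j using Fin.lastCases
  · exact absurd ((hlast _).1 hij) (Fin.castSucc_lt_last p).ne'
  · obtain rfl := hlast' _ hij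
    simpa using H.symm hx
  · obtain rfl := hlast' _ (G.symm hij)
    simpa using hx
  · simpa using hg ((hcastSucc _ _).1 hij)

variable [Fintype V] (H : LGraph V) [DecidableRel H.Adj]

def adjSum (w : V → ℕ) (v : V) : ℕ :=
  ∑ u with H.Adj v u, w u

theorem adjSum_eq_sum_subtype (w : V → ℕ) (v : V) :
    adjSum H w v = ∑ u : {u // H.Adj v u}, w u :=
  Finset.sum_subtype _ (by simp) w

variable {H}

theorem rootedHomCount_of_cons {n : ℕ} {G : LGraph (Fin (n + 2))} {G' : LGraph (Fin (n + 1))}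
    (hzero : ∀ j, G.Adj 0 j ↔ j = 1) (hsucc : ∀ i j, G.Adj i.succ j.succ ↔ G'.Adj i j) (v : V) :
    rootedHomCount G H v = adjSum H (rootedHomCount G' H) v := by
  let e : {f // G.IsHom H f ∧ f 0 = v} ≃
      Σ u : {u // H.Adj v u}, {g // G'.IsHom H g ∧ g 0 = u} :=
    { toFun := fun ⟨f, hf, hf0⟩ =>
        have hf' := (isHom_cons_iff hzero hsucc v (Fin.tail f)).1
          (by rwa [← hf0, Fin.cons_self_tail])
        ⟨⟨_, hf'.1⟩, Fin.tail f, hf'.2, rfl⟩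
      invFun := fun ⟨⟨u, hu⟩, g, hg, hg0⟩ =>
        ⟨Fin.cons v g, (isHom_cons_iff hzero hsucc v g).2 ⟨hg0 ▸ hu, hg⟩, rfl⟩
      left_inv := fun ⟨f, hf, hf0⟩ => by subst hf0; simp
      right_inv := fun ⟨⟨u, hu⟩, g, hg, hg0⟩ => Sigma.subtype_ext (Subtype.ext hg0) rfl }
  rw [rootedHomCount, Nat.card_congr e, Nat.card_sigma, adjSum_eq_sum_subtype]
  rfl

theorem rootedHomCount_of_snoc {n : ℕ} {G : LGraph (Fin (n + 2))} {G' : LGraph (Fin (n + 1))}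
    (hlast : ∀ j, G.Adj (Fin.last _) j ↔ j = 0)
    (hcastSucc : ∀ i j, G.Adj i.castSucc j.castSucc ↔ G'.Adj i j) (v : V) :
    rootedHomCount G H v = rootedHomCount G' H v * adjSum H 1 v := by
  let e : {f // G.IsHom H f ∧ f 0 = v} ≃ {g // G'.IsHom H g ∧ g 0 = v} × {u // H.Adj v u} :=
    { toFun := fun ⟨f, hf, hf0⟩ =>
        have hf' := (isHom_snoc_iff 0 hlast hcastSucc (Fin.init f) (f (Fin.last _))).1
          (by rwa [Fin.snoc_init_self])
        ⟨⟨Fin.init f, hf'.1, hf0⟩, f (Fin.last _), hf0 ▸ (hf'.2 : H.Adj (f 0) _)⟩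
      invFun := fun ⟨⟨g, hg, hg0⟩, u, hu⟩ =>
        ⟨Fin.snoc g u, (isHom_snoc_iff 0 hlast hcastSucc g u).2 ⟨hg, hg0 ▸ hu⟩, hg0⟩
      left_inv := fun ⟨f, hf, hf0⟩ => by simp
      right_inv := fun ⟨⟨g, hg, hg0⟩, u, hu⟩ => by simp }
  rw [rootedHomCount, Nat.card_congr e, Nat.card_prod, adjSum_eq_sum_subtype]
  simp [rootedHomCount]

theorem rootedHomCount_pathGraph (k : ℕ) (v : V) :
    rootedHomCount (pathGraph (k + 1)) H v = (adjSum H)^[k] 1 v := by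
  induction k generalizing v with
  | zero =>
    refine Nat.card_eq_one_iff_exists.2 ⟨⟨fun _ => v, fun i j h => ?_, rfl⟩, fun f => ?_⟩
    · simp [pathGraph] at h
    · exact Subtype.ext (funext fun i => Fin.fin_one_eq_zero i ▸ f.2.2)
  | succ k ih =>
    rw [rootedHomCount_of_cons pathGraph_adj_zero pathGraph_adj_succ, funext ih,
      Function.iterate_succ_apply']

theorem rootedHomCount_eGraph (m : ℕ) (v : V) :
    rootedHomCount (eGraph (m + 4)) H v =
      (adjSum H)^[m] (fun u => (adjSum H)^[2] 1 u * adjSum H 1 u) v := by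
  induction m generalizing v with
  | zero =>
    rw [rootedHomCount_of_snoc eGraph_four_adj_last eGraph_four_adj_castSucc,
      rootedHomCount_pathGraph]
    rfl
  | succ m ih =>
    rw [rootedHomCount_of_cons eGraph_adj_zero eGraph_adj_succ, funext ih,
      Function.iterate_succ_apply' _ m]

theorem homCount_pathGraph (k : ℕ) :
    homCount (pathGraph (k + 1)) H = ∑ v, (adjSum H)^[k] 1 v := by
  simp only [homCount_eq_sum_rootedHomCount, rootedHomCount_pathGraph]

theorem homCount_eGraph (m : ℕ) :
    homCount (eGraph (m + 4)) H =
      ∑ v, (adjSum H)^[m] (fun u => (adjSum H)^[2] 1 u * adjSum H 1 u) v := by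
  simp only [homCount_eq_sum_rootedHomCount, rootedHomCount_eGraph]

end HomCounting

section SphericallySymmetricTree

variable {x y z : ℕ}

def tStep (x y z : ℕ) (g : Fin 4 → ℕ) : Fin 4 → ℕ :=
  ![x * g 1, g 0 + y * g 2, g 1 + z * g 3, g 2]

theorem adjSum_tGraph_comp_tLevel [DecidableRel (tGraph x y z).Adj] (g : Fin 4 → ℕ) :
    adjSum (tGraph x y z) (g ∘ tLevel) = tStep x y z g ∘ tLevel := by
  funext v
  simp only [adjSum, Finset.sum_filter, Function.comp_apply]
  rcases v with _ | i | p | q <;>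
    simp [Fintype.sum_sum_type, Fintype.sum_prod_type, tGraph, tUp, tLevel, tStep, ite_and]
  all_goals rw [Finset.sum_comm]; simp

theorem iterate_adjSum_tGraph_comp_tLevel [DecidableRel (tGraph x y z).Adj] (k : ℕ)
    (g : Fin 4 → ℕ) :
    (adjSum (tGraph x y z))^[k] (g ∘ tLevel) = (tStep x y z)^[k] g ∘ tLevel :=
  (Function.Semiconj.iterate_right (f := (· ∘ tLevel))
    (fun g => (adjSum_tGraph_comp_tLevel g).symm) k g).symm

theorem sum_comp_tLevel (g : Fin 4 → ℕ) :
    ∑ v : TVert x y z, g (tLevel v) = g 0 + x * g 1 + x * y * g 2 + x * y * z * g 3 := by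
  simp [Fintype.sum_sum_type, tLevel]
  ring

end SphericallySymmetricTree

theorem stmt10 :
    homCount (pathGraph 5) (tGraph 7 1 9) = 9366 ∧
    homCount (pathGraph 7) (tGraph 7 1 9) = 106302 ∧
    homCount (eGraph 5) (tGraph 7 1 9) = 9492 ∧
    homCount (eGraph 7) (tGraph 7 1 9) = 106932 := by
  classical
  have hsum (k : ℕ) (g : Fin 4 → ℕ) : ∑ v, (adjSum (tGraph 7 1 9))^[k] (g ∘ tLevel) v =
      let h := (tStep 7 1 9)^[k] g; h 0 + 7 * h 1 + 7 * h 2 + 63 * h 3 := by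
    simp only [iterate_adjSum_tGraph_comp_tLevel, Function.comp_apply, sum_comp_tLevel]
  have hone : (1 : TVert 7 1 9 → ℕ) = (1 : Fin 4 → ℕ) ∘ tLevel := rfl
  have harms : (fun u => (adjSum (tGraph 7 1 9))^[2] 1 u * adjSum (tGraph 7 1 9) 1 u) =
      ((tStep 7 1 9)^[2] 1 * tStep 7 1 9 1) ∘ tLevel := by
    rw [hone, iterate_adjSum_tGraph_comp_tLevel, adjSum_tGraph_comp_tLevel]
    rfl
  refine ⟨?_, ?_, ?_, ?_⟩
  · rw [homCount_pathGraph 4, hone, hsum]; decide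
  · rw [homCount_pathGraph 6, hone, hsum]; decide
  · rw [homCount_eGraph 1, harms, hsum]; decide
  · rw [homCount_eGraph 3, harms, hsum]; decide
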